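/- arXiv:2201.05357 — 3 statements merged into one kernel-verified Lean document; each statement's English description precedes it below -/
import Mathlib

section
/- Let r ≥ 1 be a natural number, let f : ℝ → ℝ be smooth (ContDiff ℝ ⊤), and let y ∈ ℝ with y ≠ 0. Define the operator M on functions h : ℝ → ℝ by (M h)(t) = −t·h'(t) (deriv in t), and set g(t) = f(t)·t^{(2−r : ℤ)} (integer zpow). Then (1/y)·∑_{k=0}^{r−1} s(r−1,k)·((M)^[k] g)(y) = (−1)^{r−1}·(iteratedDeriv (r−1) f)(y). This is Proposition 5.1 of the paper after substituting the Stirling-number evaluation of the v-coefficients: it shows that the operator (1/y)·∑_{k≥0}(−y d/dy)^k (y/x)[v^k](∂_p+v/p)^{r−1}·1|_{p=xy} x^r appearing in the theorem of Borot–Charbonnier–Garcia-Failde reduces to (−1)^{r−1} d^{r−1}/dy^{r−1}. -/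
/-- Signed Stirling numbers of the first kind. -/
def stirlingS1 : ℕ → ℕ → ℤ
  | 0, 0 => 1
  | 0, _ + 1 => 0
  | r + 1, 0 => -(r : ℤ) * stirlingS1 r 0
  | r + 1, k + 1 => stirlingS1 r k - (r : ℤ) * stirlingS1 r (k + 1)

/-- The operator `(M h)(t) = −t·h'(t)`. -/
noncomputable def Mop (h : ℝ → ℝ) : ℝ → ℝ :=
  fun t => -t * deriv h t


section Aux
open Set Filter Finset

lemma nhds_compl_zero {y : ℝ} (hy : y ≠ 0) : ({0}ᶜ : Set ℝ) ∈ nhds y :=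
  isOpen_compl_singleton.mem_nhds hy

lemma contDiffOn_deriv' {f : ℝ → ℝ} (hf : ContDiffOn ℝ (⊤ : ℕ∞) f {0}ᶜ) :
    ContDiffOn ℝ (⊤ : ℕ∞) (deriv f) {0}ᶜ :=
  hf.deriv_of_isOpen isOpen_compl_singleton (by simp)

lemma diffAt_of_cdo {f : ℝ → ℝ} (hf : ContDiffOn ℝ (⊤ : ℕ∞) f {0}ᶜ) {y : ℝ} (hy : y ≠ 0) :
    DifferentiableAt ℝ f y :=
  ((hf.differentiableOn (by simp)).differentiableAt (nhds_compl_zero hy))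

lemma contDiffOn_zpow' (m : ℤ) : ContDiffOn ℝ (⊤ : ℕ∞) (fun t : ℝ => t ^ m) {0}ᶜ := by
  cases m with
  | ofNat a => simpa [zpow_natCast] using ((contDiff_id (𝕜 := ℝ)).pow a).contDiffOn
  | negSucc a =>
      have : (fun t : ℝ => t ^ (Int.negSucc a)) = fun t : ℝ => (t ^ (a+1))⁻¹ := by
        funext t; rw [zpow_negSucc]
      rw [this]
      exact (((contDiff_id (𝕜 := ℝ)).pow (a+1)).contDiffOn).inv
        (fun t ht => pow_ne_zero _ ht)

lemma mop_cdo {h : ℝ → ℝ} (hh : ContDiffOn ℝ (⊤ : ℕ∞) h {0}ᶜ) : ContDiffOn ℝ (⊤ : ℕ∞) (Mop h) {0}ᶜ :=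
  ((contDiffOn_id (𝕜 := ℝ)).neg.mul (contDiffOn_deriv' hh))

lemma mop_iter_cdo {h : ℝ → ℝ} (hh : ContDiffOn ℝ (⊤ : ℕ∞) h {0}ᶜ) (k : ℕ) :
    ContDiffOn ℝ (⊤ : ℕ∞) (Mop^[k] h) {0}ᶜ := by
  induction k with
  | zero => simpa using hh
  | succ k ih => rw [Function.iterate_succ_apply']; exact mop_cdo ih

lemma mop_eqOn {g₁ g₂ : ℝ → ℝ} (h : Set.EqOn g₁ g₂ {0}ᶜ) :
    Set.EqOn (Mop g₁) (Mop g₂) {0}ᶜ := by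
  intro y hy
  have h2 : g₁ =ᶠ[nhds y] g₂ := eventually_of_mem (nhds_compl_zero hy) h
  simp [Mop, h2.deriv_eq]

lemma mop_iter_eqOn {g₁ g₂ : ℝ → ℝ} (h : Set.EqOn g₁ g₂ {0}ᶜ) (k : ℕ) :
    Set.EqOn (Mop^[k] g₁) (Mop^[k] g₂) {0}ᶜ := by
  induction k with
  | zero => simpa using h
  | succ k ih => rw [Function.iterate_succ_apply', Function.iterate_succ_apply']
                 exact mop_eqOn ih

lemma itd_cdo {f : ℝ → ℝ} (hf : ContDiffOn ℝ (⊤ : ℕ∞) f {0}ᶜ) (n : ℕ) :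
    ContDiffOn ℝ (⊤ : ℕ∞) (iteratedDeriv n f) {0}ᶜ := by
  induction n with
  | zero => simpa using hf
  | succ n ih => rw [iteratedDeriv_succ]; exact contDiffOn_deriv' ih

lemma itd_eqOn {f₁ f₂ : ℝ → ℝ} (h : Set.EqOn f₁ f₂ {0}ᶜ) (n : ℕ) :
    Set.EqOn (iteratedDeriv n f₁) (iteratedDeriv n f₂) {0}ᶜ := by
  induction n with
  | zero => simpa using h
  | succ n ih =>
      rw [iteratedDeriv_succ, iteratedDeriv_succ]
      intro y hy
      have h2 : iteratedDeriv n f₁ =ᶠ[nhds y] iteratedDeriv n f₂ :=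
        eventually_of_mem (nhds_compl_zero hy) ih
      exact h2.deriv_eq

lemma leib {f : ℝ → ℝ} (hf : ContDiffOn ℝ (⊤ : ℕ∞) f {0}ᶜ) (n : ℕ) :
    ∀ y : ℝ, y ≠ 0 → iteratedDeriv n (fun t => t * f t) y
      = y * iteratedDeriv n f y + n * iteratedDeriv (n - 1) f y := by
  induction n with
  | zero => intro y _; simp
  | succ n ih =>
      intro y hy
      rw [iteratedDeriv_succ]
      have h2 : iteratedDeriv n (fun t => t * f t)
          =ᶠ[nhds y] fun t => t * iteratedDeriv n f t + n * iteratedDeriv (n - 1) f t :=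
        eventually_of_mem (nhds_compl_zero hy) (fun t ht => ih t ht)
      rw [h2.deriv_eq]
      have d1 : DifferentiableAt ℝ (iteratedDeriv n f) y := diffAt_of_cdo (itd_cdo hf n) hy
      have d0 : DifferentiableAt ℝ (iteratedDeriv (n - 1) f) y :=
        diffAt_of_cdo (itd_cdo hf (n - 1)) hy
      rw [deriv_fun_add (differentiableAt_fun_id.fun_mul d1) (d0.const_mul _),
        deriv_fun_mul differentiableAt_fun_id d1, deriv_const_mul _ d0]
      have key : (n : ℝ) * deriv (iteratedDeriv (n - 1) f) y = n * iteratedDeriv n f y := by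
        cases n with
        | zero => simp
        | succ m => simp [← iteratedDeriv_succ]
      rw [key]
      simp [← iteratedDeriv_succ]
      push_cast
      ring

lemma stirling_zero : ∀ n k : ℕ, n < k → stirlingS1 n k = 0 := by
  intro n
  induction n with
  | zero => intro k hk; match k, hk with
            | k + 1, _ => rfl
  | succ n ih =>
      intro k hk
      match k, hk with
      | k + 1, hk =>
          have h1 : n < k := by omega
          have h2 : n < k + 1 := by omega
          show stirlingS1 n k - (n : ℤ) * stirlingS1 n (k+1) = 0
          rw [ih k h1, ih (k+1) h2]; ring

lemma key : ∀ n : ℕ, ∀ f : ℝ → ℝ, ContDiffOn ℝ (⊤ : ℕ∞) f {0}ᶜ → ∀ y : ℝ, y ≠ 0 →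
    ∑ k ∈ Finset.range (n + 1),
        (stirlingS1 n k : ℝ) * (Mop^[k] (fun t => f t * t ^ ((1 : ℤ) - n))) y
      = (-1) ^ n * y * iteratedDeriv n f y := by
  intro n
  induction n with
  | zero =>
      intro f hf y hy
      simp [stirlingS1, Mop]
      ring
  | succ n ih =>
      intro f hf y hy
      -- the auxiliary function f̃ = f / t
      set F : ℝ → ℝ := fun t => f t * t⁻¹ with hF
      have hFc : ContDiffOn ℝ (⊤ : ℕ∞) F {0}ᶜ := hf.mul (contDiffOn_inv ℝ)
      -- g : the target inner function, g' : via F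
      set g : ℝ → ℝ := fun t => f t * t ^ ((1 : ℤ) - (n + 1 : ℕ)) with hg
      have hgc : ContDiffOn ℝ (⊤ : ℕ∞) g {0}ᶜ := hf.mul (contDiffOn_zpow' _)
      have hEq : Set.EqOn (fun t => F t * t ^ ((1 : ℤ) - n)) g {0}ᶜ := by
        intro t ht
        have ht : t ≠ 0 := ht
        show f t * t⁻¹ * t ^ ((1 : ℤ) - n) = f t * t ^ ((1 : ℤ) - (n + 1 : ℕ))
        have he : ((1 : ℤ) - (n + 1 : ℕ)) = (-1) + ((1 : ℤ) - n) := by push_cast; ring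
        rw [he, zpow_add₀ ht, zpow_neg_one]
        ring
      -- h := the level-n sum applied to g
      set h : ℝ → ℝ := fun t => ∑ k ∈ Finset.range (n + 1),
          (stirlingS1 n k : ℝ) * (Mop^[k] g) t with hh
      have hval : ∀ t : ℝ, t ≠ 0 → h t = (-1) ^ n * t * iteratedDeriv n F t := by
        intro t ht
        have := ih F hFc t ht
        rw [← this]
        exact Finset.sum_congr rfl fun k hk => by
          rw [mop_iter_eqOn hEq k ht]
      -- differentiability of each Mop^[k] g
      have hdiff : ∀ k, DifferentiableAt ℝ (Mop^[k] g) y :=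
        fun k => diffAt_of_cdo (mop_iter_cdo hgc k) hy
      -- split the sum using the recurrence
      rw [Finset.sum_range_succ' _ (n + 1)]
      have hrec : ∀ k, (stirlingS1 (n + 1) (k + 1) : ℝ)
          = stirlingS1 n k - (n : ℝ) * stirlingS1 n (k + 1) := by
        intro k; show ((stirlingS1 n k - (n : ℤ) * stirlingS1 n (k + 1) : ℤ) : ℝ) = _
        push_cast; ring
      have h0 : (stirlingS1 (n + 1) 0 : ℝ) = -(n : ℝ) * stirlingS1 n 0 := by
        show ((-(n : ℤ) * stirlingS1 n 0 : ℤ) : ℝ) = _; push_cast; ring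
      have hstep : ∀ k, Mop^[k + 1] g y = -y * deriv (Mop^[k] g) y := by
        intro k; rw [Function.iterate_succ_apply']; rfl
      have hderivh : deriv h y
          = ∑ k ∈ Finset.range (n + 1), (stirlingS1 n k : ℝ) * deriv (Mop^[k] g) y := by
        rw [hh, deriv_fun_sum (fun k _ => ((hdiff k).const_mul _))]
        exact Finset.sum_congr rfl fun k _ => deriv_const_mul _ (hdiff k)
      have hDF : DifferentiableAt ℝ (iteratedDeriv n F) y := diffAt_of_cdo (itd_cdo hFc n) hy
      have hEq2 : h =ᶠ[nhds y] fun t => (-1) ^ n * (t * iteratedDeriv n F t) :=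
        eventually_of_mem (nhds_compl_zero hy) (fun t ht => by
          rw [hval t ht]; ring)
      have hderivh2 : deriv h y
          = (-1) ^ n * (iteratedDeriv n F y + y * iteratedDeriv (n + 1) F y) := by
        rw [hEq2.deriv_eq, deriv_const_mul _ (differentiableAt_fun_id.fun_mul hDF),
          deriv_fun_mul differentiableAt_fun_id hDF, ← iteratedDeriv_succ]
        simp
      have hfF : Set.EqOn f (fun t => t * F t) {0}ᶜ := by
        intro t ht
        have ht : t ≠ 0 := ht
        show f t = t * (f t * t⁻¹)
        field_simp
      have hitd : iteratedDeriv (n + 1) f y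
          = y * iteratedDeriv (n + 1) F y + ((n : ℝ) + 1) * iteratedDeriv n F y := by
        rw [itd_eqOn hfF (n + 1) hy, leib hFc (n + 1) y hy]
        push_cast
        norm_num
      have hsum1 : ∑ k ∈ Finset.range (n + 1), (stirlingS1 n k : ℝ) * Mop^[k + 1] g y
          = -y * deriv h y := by
        rw [hderivh, Finset.mul_sum]
        exact Finset.sum_congr rfl fun k _ => by rw [hstep k]; ring
      have hsum2 : ∑ k ∈ Finset.range (n + 1), (stirlingS1 n (k + 1) : ℝ) * Mop^[k + 1] g y
          = h y - (stirlingS1 n 0 : ℝ) * g y := by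
        have hz : ((stirlingS1 n (n + 1) : ℤ) : ℝ) = 0 := by
          rw [stirling_zero n (n + 1) (by omega)]; norm_num
        have e1 : ∑ k ∈ Finset.range (n + 1 + 1), (stirlingS1 n k : ℝ) * Mop^[k] g y
            = h y := by
          rw [Finset.sum_range_succ, hz, hh]; simp
        have e2 := Finset.sum_range_succ'
          (fun k => (stirlingS1 n k : ℝ) * Mop^[k] g y) (n + 1)
        rw [e1] at e2
        simp only [Function.iterate_zero_apply] at e2
        linarith
      have hL : ∑ k ∈ Finset.range (n + 1),
            (stirlingS1 (n + 1) (k + 1) : ℝ) * Mop^[k + 1] g y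
          = -y * deriv h y - (n : ℝ) * (h y - (stirlingS1 n 0 : ℝ) * g y) := by
        calc ∑ k ∈ Finset.range (n + 1),
              (stirlingS1 (n + 1) (k + 1) : ℝ) * Mop^[k + 1] g y
            = ∑ k ∈ Finset.range (n + 1),
                ((stirlingS1 n k : ℝ) * Mop^[k + 1] g y
                  - (n : ℝ) * ((stirlingS1 n (k + 1) : ℝ) * Mop^[k + 1] g y)) := by
              refine Finset.sum_congr rfl fun k _ => ?_
              rw [hrec k]; ring
          _ = (∑ k ∈ Finset.range (n + 1), (stirlingS1 n k : ℝ) * Mop^[k + 1] g y)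
              - (n : ℝ) * ∑ k ∈ Finset.range (n + 1),
                  (stirlingS1 n (k + 1) : ℝ) * Mop^[k + 1] g y := by
              rw [Finset.sum_sub_distrib, Finset.mul_sum]
          _ = _ := by rw [hsum1, hsum2]
      rw [hL, h0]
      simp only [Function.iterate_zero_apply]
      rw [hderivh2, hval y hy, hitd]
      push_cast
      ring

end Aux

theorem stirling_operator_reduction (r : ℕ) (hr : 1 ≤ r) (f : ℝ → ℝ)
    (hf : ContDiff ℝ (⊤ : ℕ∞) f) (y : ℝ) (hy : y ≠ 0) :
    (1 / y) * ∑ k ∈ Finset.range r,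
        (stirlingS1 (r - 1) k : ℝ) * (Mop^[k] (fun t => f t * t ^ ((2 : ℤ) - r))) y
      = (-1) ^ (r - 1) * iteratedDeriv (r - 1) f y := by
  obtain ⟨n, rfl⟩ := Nat.exists_eq_add_of_le hr
  have h1 : 1 + n - 1 = n := by omega
  have h2 : ((2 : ℤ) - (1 + n : ℕ)) = (1 : ℤ) - n := by push_cast; ring
  have h3 : 1 + n = n + 1 := by omega
  rw [h1, h2, h3, key n f hf.contDiffOn y hy]
  field_simp
end

section
/- Let F = FractionRing (MvPolynomial (Fin 3) ℚ), with Z₁, Z₂, Z₃ ∈ F the images of the three polynomial variables, and let q = X be the variable of the one-variable rational function field RatFunc F. Define H ∈ RatFunc F by H = −(1/(4·q·(Z₃² − q²)))·( 1/((Z₁−q)²·(Z₂+q)²) + 1/((Z₁+q)²·(Z₂−q)²) ). Then the coefficient at −1 (the residue at q = 0) of the image of H under the canonical embedding of RatFunc F into the field of formal Laurent series LaurentSeries F equals −1/(2·Z₁²·Z₂²·Z₃²). -/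
/-!
Clearing denominators writes the integrand as `N(q) / (q · s(q))` with polynomials `N`, `s` and
`s(0) = 4 Z₃² Z₁⁴ Z₂⁴ ≠ 0`. Since `s` is a unit in `F⟦q⟧`, the Laurent expansion is `q⁻¹` times the
power series `N · s⁻¹`, whose residue is `N(0) / s(0) = -2 Z₁² Z₂² / (4 Z₃² Z₁⁴ Z₂⁴)`.
-/

open scoped LaurentSeries

noncomputable section

/-- The field of rational functions in three (transcendental) variables. -/
abbrev F3 : Type := FractionRing (MvPolynomial (Fin 3) ℚ)

/-- The images `Z₁, Z₂, Z₃` of the polynomial variables in `F3`, as constants of `RatFunc F3`. -/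
def Z3 (i : Fin 3) : RatFunc F3 :=
  RatFunc.C (algebraMap (MvPolynomial (Fin 3) ℚ) F3 (MvPolynomial.X i))

open Polynomial

namespace RatFunc

variable {K : Type*} [Field K]

theorem coe_div_eq_ofPowerSeries (p s : K[X]) (hs : s.eval 0 ≠ 0) :
    ((p / s : RatFunc K) : K⸨X⸩) =
      HahnSeries.ofPowerSeries ℤ K ((p : PowerSeries K) * (s : PowerSeries K)⁻¹) := by
  have hS : PowerSeries.constantCoeff (s : PowerSeries K) ≠ 0 := by
    rwa [Polynomial.constantCoeff_coe, coeff_zero_eq_eval_zero]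
  have hSL : HahnSeries.ofPowerSeries ℤ K (s : PowerSeries K) ≠ 0 :=
    (map_ne_zero_iff _ HahnSeries.ofPowerSeries_injective).mpr fun h => hS (by simp [h])
  rw [map_div₀, ← coe_coe, ← coe_coe, div_eq_iff hSL, ← map_mul, mul_assoc,
    PowerSeries.inv_mul_cancel _ hS, mul_one]

theorem coeff_zero_coe_div (p s : K[X]) (hs : s.eval 0 ≠ 0) :
    ((p / s : RatFunc K) : K⸨X⸩).coeff 0 = p.eval 0 / s.eval 0 := by
  have h := HahnSeries.ofPowerSeries_apply_coeff (Γ := ℤ)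
    ((p : PowerSeries K) * (s : PowerSeries K)⁻¹) 0
  rw [Nat.cast_zero] at h
  rw [coe_div_eq_ofPowerSeries p s hs, h, PowerSeries.coeff_zero_eq_constantCoeff_apply, map_mul,
    PowerSeries.constantCoeff_inv, Polynomial.constantCoeff_coe, Polynomial.constantCoeff_coe,
    coeff_zero_eq_eval_zero, coeff_zero_eq_eval_zero, div_eq_mul_inv]

theorem coeff_neg_one_coe_div_X (f : RatFunc K) :
    ((f / X : RatFunc K) : K⸨X⸩).coeff (-1) = (f : K⸨X⸩).coeff 0 := by
  rw [map_div₀, coe_X, div_eq_mul_inv, HahnSeries.inv_single, inv_one]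
  simpa using HahnSeries.coeff_mul_single_add (x := (f : K⸨X⸩)) (a := 0) (b := -1) (r := 1)

theorem coeff_neg_one_coe_div_X_mul (p s : K[X]) (hs : s.eval 0 ≠ 0) :
    (((p : RatFunc K) / (X * (s : RatFunc K)) : RatFunc K) : K⸨X⸩).coeff (-1) =
      p.eval 0 / s.eval 0 := by
  rw [div_mul_eq_div_div_swap, coeff_neg_one_coe_div_X, coeff_zero_coe_div p s hs]

theorem X_ne_C (r : K) : (X : RatFunc K) ≠ C r := by
  rw [← algebraMap_X, ← algebraMap_C]
  exact (IsFractionRing.injective K[X] (RatFunc K)).ne (Polynomial.X_ne_C r)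

theorem C_sub_X_ne_zero (r : K) : C r - X ≠ 0 :=
  sub_ne_zero.mpr (X_ne_C r).symm

theorem C_add_X_ne_zero (r : K) : C r + X ≠ 0 := by
  rw [add_comm, ← sub_neg_eq_add, ← map_neg]
  exact sub_ne_zero.mpr (X_ne_C (-r))

end RatFunc

namespace Airy

variable {K : Type*} [Field K]

/-- The integrand `H` of `ω₀,₃` for the Airy curve, with `zᵢ` specialised to constants `a, b, c`. -/
def omega03Integrand (a b c : K) : RatFunc K :=
  -(1 / (4 * RatFunc.X * (RatFunc.C c ^ 2 - RatFunc.X ^ 2))) *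
    (1 / ((RatFunc.C a - RatFunc.X) ^ 2 * (RatFunc.C b + RatFunc.X) ^ 2) +
      1 / ((RatFunc.C a + RatFunc.X) ^ 2 * (RatFunc.C b - RatFunc.X) ^ 2))

def omega03Numerator (a b : K) : K[X] :=
  -(((C a + X) * (C b - X)) ^ 2 + ((C a - X) * (C b + X)) ^ 2)

def omega03Denominator (a b c : K) : K[X] :=
  4 * (C c ^ 2 - X ^ 2) * ((C a - X) * (C a + X) * (C b - X) * (C b + X)) ^ 2

theorem omega03Integrand_eq_div [CharZero K] (a b c : K) :
    omega03Integrand a b c =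
      (omega03Numerator a b : RatFunc K) / (RatFunc.X * (omega03Denominator a b c : RatFunc K)) := by
  have hX : (RatFunc.X : RatFunc K) ≠ 0 := RatFunc.X_ne_zero
  have ha_sub := RatFunc.C_sub_X_ne_zero a
  have ha_add := RatFunc.C_add_X_ne_zero a
  have hb_sub := RatFunc.C_sub_X_ne_zero b
  have hb_add := RatFunc.C_add_X_ne_zero b
  have hc : (RatFunc.C c : RatFunc K) ^ 2 - RatFunc.X ^ 2 ≠ 0 := by
    rw [sq_sub_sq]
    exact mul_ne_zero (RatFunc.C_add_X_ne_zero c) (RatFunc.C_sub_X_ne_zero c)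
  simp only [omega03Integrand, omega03Numerator, omega03Denominator,
    RatFunc.coePolynomial_eq_algebraMap, RatFunc.algebraMap_C, RatFunc.algebraMap_X, map_neg,
    map_add, map_mul, map_sub, map_pow, map_ofNat]
  field_simp

theorem eval_zero_omega03Numerator (a b : K) :
    (omega03Numerator a b).eval 0 = -(2 * a ^ 2 * b ^ 2) := by
  simp only [omega03Numerator, eval_neg, eval_add, eval_mul, eval_sub, eval_pow, eval_C, eval_X]
  ring

theorem eval_zero_omega03Denominator (a b c : K) :
    (omega03Denominator a b c).eval 0 = 4 * c ^ 2 * a ^ 4 * b ^ 4 := by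
  simp only [omega03Denominator, eval_mul, eval_sub, eval_add, eval_pow, eval_C, eval_X,
    eval_ofNat]
  ring

end Airy

open Airy in
theorem airy_omega03_residue :
    (((-(1 / (4 * RatFunc.X * ((Z3 2) ^ 2 - RatFunc.X ^ 2))) *
        (1 / (((Z3 0) - RatFunc.X) ^ 2 * ((Z3 1) + RatFunc.X) ^ 2) +
         1 / (((Z3 0) + RatFunc.X) ^ 2 * ((Z3 1) - RatFunc.X) ^ 2))) : RatFunc F3) :
      LaurentSeries F3).coeff (-1)
    = -1 / (2 * (algebraMap (MvPolynomial (Fin 3) ℚ) F3 (MvPolynomial.X 0)) ^ 2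
              * (algebraMap (MvPolynomial (Fin 3) ℚ) F3 (MvPolynomial.X 1)) ^ 2
              * (algebraMap (MvPolynomial (Fin 3) ℚ) F3 (MvPolynomial.X 2)) ^ 2) := by
  set Z : Fin 3 → F3 := fun i => algebraMap (MvPolynomial (Fin 3) ℚ) F3 (MvPolynomial.X i)
  have hZ (i : Fin 3) : Z i ≠ 0 :=
    (map_ne_zero_iff _ (IsFractionRing.injective _ _)).mpr (MvPolynomial.X_ne_zero i)
  have h_den : (omega03Denominator (Z 0) (Z 1) (Z 2)).eval 0 ≠ 0 := by
    simp [eval_zero_omega03Denominator, hZ]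
  change ((omega03Integrand (Z 0) (Z 1) (Z 2) : RatFunc F3) : F3⸨X⸩).coeff (-1) = _
  rw [omega03Integrand_eq_div, RatFunc.coeff_neg_one_coe_div_X_mul _ _ h_den,
    eval_zero_omega03Numerator, eval_zero_omega03Denominator]
  field_simp [hZ]
  ring
end
end

section
/- For every n ≥ 0 and every m ≥ 1, the following map is a bijection onto 𝒢(n+1,m): its domain is the set of pairs (S, c) with S ∈ 𝒢(n,m) and c either an element k of {1,…,m} or an element (I,J) of S; the pair (S, k) is sent to S ∪ {({n+1},{k})}, and the pair (S, (I,J)) is sent to (S ∖ {(I,J)}) ∪ {(I ∪ {n+1}, J)}. In particular, the cardinality of 𝒢(n+1,m) equals ∑_{S ∈ 𝒢(n,m)} (m + |S|). -/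
/-- The bipartite adjacency: a black vertex `(I,J) ∈ S` is adjacent to a circle vertex
`j : Fin m` exactly when `j ∈ J`. -/
def bipAdj {n m : ℕ} (S : Finset (Finset (Fin n) × Finset (Fin m)))
    (v w : {p // p ∈ S} ⊕ Fin m) : Prop :=
  ∃ (p : {p // p ∈ S}) (j : Fin m), j ∈ p.val.2 ∧
    ((v = Sum.inl p ∧ w = Sum.inr j) ∨ (v = Sum.inr j ∧ w = Sum.inl p))

/-- The bipartite graph on the disjoint union of the black vertices `S` and the circle
vertices `Fin m`. -/
def bipGraph {n m : ℕ} (S : Finset (Finset (Fin n) × Finset (Fin m))) :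
    SimpleGraph ({p // p ∈ S} ⊕ Fin m) where
  Adj := bipAdj S
  symm := by
    constructor
    rintro v w ⟨p, j, hj, ⟨h1, h2⟩ | ⟨h1, h2⟩⟩
    · exact ⟨p, j, hj, Or.inr ⟨h2, h1⟩⟩
    · exact ⟨p, j, hj, Or.inl ⟨h2, h1⟩⟩
  loopless := by
    constructor
    rintro v ⟨p, j, hj, ⟨h1, h2⟩ | ⟨h1, h2⟩⟩ <;> simp_all

/-- The set `𝒢(n,m)` of trees of Definition 4.1, encoded as the set of their black
vertices: a finite set `S` of pairs `(I,J)` with `I ⊆ {1,…,n}`, `J ⊆ {1,…,m}`, such that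
every black vertex has valence `≥ 2`, the first components are pairwise disjoint with
union `{1,…,n}`, and the associated bipartite graph is a tree. -/
def Gset (n m : ℕ) : Set (Finset (Finset (Fin n) × Finset (Fin m))) :=
  {S | (∀ p ∈ S, 2 ≤ p.1.card + p.2.card) ∧
    (S : Set (Finset (Fin n) × Finset (Fin m))).PairwiseDisjoint Prod.fst ∧
    S.biUnion Prod.fst = Finset.univ ∧
    (bipGraph S).IsTree}

/-- Lift a black vertex over `Fin n` to one over `Fin (n+1)` along `Fin.castSucc`. -/
def liftBV {n m : ℕ} (p : Finset (Fin n) × Finset (Fin m)) :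
    Finset (Fin (n + 1)) × Finset (Fin m) :=
  (p.1.image Fin.castSucc, p.2)

/-- Attach the new box vertex labelled `n+1` to a tree `S ∈ 𝒢(n,m)`: either to a circle
vertex `k` via a new two-valent black vertex, or to an existing black vertex `(I,J) ∈ S`. -/
def attachBox {n m : ℕ}
    (x : Finset (Finset (Fin n) × Finset (Fin m)) ×
      (Fin m ⊕ (Finset (Fin n) × Finset (Fin m)))) :
    Finset (Finset (Fin (n + 1)) × Finset (Fin m)) :=
  match x.2 with
  | Sum.inl k => insert ({Fin.last n}, {k}) (x.1.image liftBV)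
  | Sum.inr p =>
      insert (insert (Fin.last n) (p.1.image Fin.castSucc), p.2)
        ((x.1.erase p).image liftBV)

/-!
Both cases of `attachBox` produce `insert (extendBV p) (A.image liftBV)`: `extendBV p` is the
only black vertex carrying the new box `n + 1`, and `insert p A` is the family obtained by
deleting that box, where `p = (∅, {k})` is a new leaf in the first case and `p ∈ S`,
`A = S.erase p` in the second. Deleting the box changes neither the bipartite graph nor the
partition property and lowers one valence by one, so every tree over `n + 1` has this form for a
unique pair `(p, A)`, and whether `p` is a leaf decides the case. The one subtle point is
`p ∉ A`: otherwise disjointness leaves `p` without boxes, so `liftBV p` and `extendBV p` share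
its (at least two) circle neighbours and close a 4-cycle.
-/

namespace SimpleGraph

variable {V W : Type*} {G : SimpleGraph V} {H : SimpleGraph W}

theorem isTree_iff_induce_compl_singleton {v : V} (hv : ∃! u, G.Adj v u) :
    G.IsTree ↔ (G.induce {v}ᶜ).IsTree := by
  obtain ⟨u, hvu, hu⟩ := hv
  constructor
  · intro hG
    refine ⟨(connected_iff _).2 ⟨hG.connected.preconnected.induce_of_degree_eq_one ?_,
      ⟨⟨u, hvu.ne'⟩⟩⟩, hG.isAcyclic.induce _⟩
    rintro w hw a ha b hb
    rw [Set.notMem_compl_iff, Set.mem_singleton_iff] at hw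
    subst hw
    exact (hu a ha).trans (hu b hb).symm
  · intro hT
    have hreach : ∀ w, G.Reachable w u := by
      intro w
      by_cases hw : w = v
      · exact hw ▸ hvu.reachable
      · exact (hT.connected ⟨w, hw⟩ ⟨u, hvu.ne'⟩).map (Embedding.induce _).toHom
    refine ⟨(connected_iff _).2 ⟨fun a b => (hreach a).trans (hreach b).symm, ⟨v⟩⟩, ?_⟩
    intro w c hc
    by_cases hvc : v ∈ c.support
    · classical
      -- a cycle through `v` leaves it along two distinct edges
      have hc' := hc.rotate hvc
      exact hc'.snd_ne_penultimate ((hu _ (Walk.adj_snd hc'.not_nil)).trans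
        (hu _ (Walk.adj_penultimate hc'.not_nil).symm).symm)
    · let e := Embedding.induce (G := G) {v}ᶜ
      refine hT.isAcyclic (c.induce {v}ᶜ fun x hx hxv => hvc (hxv ▸ hx)) ?_
      rw [← Walk.isCycle_map_iff_of_injective (f := e.toHom) e.injective, Walk.map_induce]
      exact hc

theorem Embedding.isTree_iff_of_range_eq_compl (f : G ↪g H) {v : W}
    (hf : Set.range f = {v}ᶜ) (hv : ∃! u, H.Adj v u) : G.IsTree ↔ H.IsTree := by
  rw [f.isoInduceRange.isTree_iff, hf, isTree_iff_induce_compl_singleton hv]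

end SimpleGraph

open SimpleGraph

section BipGraph

variable {n n' m : ℕ} {S : Finset (Finset (Fin n) × Finset (Fin m))}
  {T : Finset (Finset (Fin n') × Finset (Fin m))}

@[simp] theorem bipGraph_adj_inl_inr {p : {p // p ∈ S}} {j : Fin m} :
    (bipGraph S).Adj (Sum.inl p) (Sum.inr j) ↔ j ∈ p.val.2 := by
  refine ⟨?_, fun h => ⟨p, j, h, Or.inl ⟨rfl, rfl⟩⟩⟩
  rintro ⟨p', j', hj', ⟨h1, h2⟩ | ⟨h1, -⟩⟩
  · cases h1; cases h2; exact hj'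
  · cases h1

@[simp] theorem bipGraph_adj_inr_inl {p : {p // p ∈ S}} {j : Fin m} :
    (bipGraph S).Adj (Sum.inr j) (Sum.inl p) ↔ j ∈ p.val.2 := by
  rw [SimpleGraph.adj_comm, bipGraph_adj_inl_inr]

@[simp] theorem bipGraph_not_adj_inl_inl {p q : {p // p ∈ S}} :
    ¬ (bipGraph S).Adj (Sum.inl p) (Sum.inl q) := by
  rintro ⟨p', j', hj', ⟨-, h⟩ | ⟨h, -⟩⟩ <;> cases h

@[simp] theorem bipGraph_not_adj_inr_inr {i j : Fin m} :
    ¬ (bipGraph S).Adj (Sum.inr i) (Sum.inr j) := by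
  rintro ⟨p', j', hj', ⟨h, -⟩ | ⟨-, h⟩⟩ <;> cases h

def bipGraphEmbedding (g : {p // p ∈ S} ↪ {q // q ∈ T}) (hg : ∀ p, (g p).val.2 = p.val.2) :
    bipGraph S ↪g bipGraph T where
  toEmbedding := g.sumMap (Function.Embedding.refl _)
  map_rel_iff' := by
    rintro (p | i) (q | j) <;> simp [hg]

@[simp] theorem bipGraphEmbedding_apply (g : {p // p ∈ S} ↪ {q // q ∈ T})
    (hg : ∀ p, (g p).val.2 = p.val.2) (x : {p // p ∈ S} ⊕ Fin m) :
    bipGraphEmbedding g hg x = Sum.map g id x := rfl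

theorem isTree_bipGraph_image_iff
    {f : Finset (Fin n) × Finset (Fin m) → Finset (Fin n') × Finset (Fin m)}
    (hf : Set.InjOn f S) (hsnd : ∀ p, (f p).2 = p.2) :
    (bipGraph (S.image f)).IsTree ↔ (bipGraph S).IsTree := by
  let g : {p // p ∈ S} ↪ {q // q ∈ S.image f} :=
    ⟨fun p => ⟨f p, Finset.mem_image_of_mem f p.2⟩,
      fun p q h => Subtype.ext (hf p.2 q.2 (congrArg Subtype.val h))⟩
  have hsurj : Function.Surjective (bipGraphEmbedding g fun p => hsnd p) := by
    rintro (⟨q, hq⟩ | j)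
    · obtain ⟨p, hp, rfl⟩ := Finset.mem_image.1 hq
      exact ⟨Sum.inl ⟨p, hp⟩, rfl⟩
    · exact ⟨Sum.inr j, rfl⟩
  exact (Iso.isTree_iff (RelIso.ofSurjective _ hsurj)).symm

theorem isTree_bipGraph_insert_iff {q : Finset (Fin n) × Finset (Fin m)} {k : Fin m}
    (hq : q ∉ S) (hk : q.2 = {k}) :
    (bipGraph (insert q S)).IsTree ↔ (bipGraph S).IsTree := by
  obtain ⟨g, hg⟩ :
      ∃ g : {p // p ∈ S} ↪ {p // p ∈ insert q S}, ∀ p, (g p).val = p.val :=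
    ⟨⟨Subtype.map id fun _ => Finset.mem_insert_of_mem,
      Subtype.map_injective _ Function.injective_id⟩, fun _ => rfl⟩
  refine ((bipGraphEmbedding g fun p => by rw [hg]).isTree_iff_of_range_eq_compl
    (v := Sum.inl ⟨q, Finset.mem_insert_self q S⟩) ?_ ⟨Sum.inr k, by simp [hk], ?_⟩).symm
  · ext (⟨p, hp⟩ | j)
    · rcases Finset.mem_insert.1 hp with rfl | hp
      · simp [Subtype.ext_iff, hg, hq]
      · simp [Subtype.ext_iff, hg, hp, ne_of_mem_of_not_mem hp hq]
    · simp
  · rintro (p | j) h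
    · simp at h
    · simpa [hk] using h

theorem snd_nonempty_of_isTree_bipGraph (hm : 0 < m) (hS : (bipGraph S).IsTree)
    {p : Finset (Fin n) × Finset (Fin m)} (hp : p ∈ S) : p.2.Nonempty := by
  obtain ⟨w⟩ := hS.connected.preconnected (Sum.inl ⟨p, hp⟩) (Sum.inr ⟨0, hm⟩)
  have h := w.adj_snd (Walk.not_nil_of_ne (by simp))
  generalize w.snd = v at h
  rcases v with q | j
  · simp at h
  · exact ⟨j, by simpa using h⟩

theorem eq_of_isTree_bipGraph (hS : (bipGraph S).IsTree)
    {p r : Finset (Fin n) × Finset (Fin m)} (hp : p ∈ S) (hr : r ∈ S)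
    (h : 1 < (p.2 ∩ r.2).card) : p = r := by
  obtain ⟨i, hi, j, hj, hij⟩ := Finset.one_lt_card.1 h
  rw [Finset.mem_inter] at hi hj
  by_contra hpr
  have hne : (⟨p, hp⟩ : {x // x ∈ S}) ≠ ⟨r, hr⟩ := fun h => hpr (congrArg Subtype.val h)
  let c : (bipGraph S).Walk (Sum.inl ⟨p, hp⟩) (Sum.inl ⟨p, hp⟩) :=
    .cons (v := Sum.inr i) (by simpa using hi.1) <|
      .cons (v := Sum.inl ⟨r, hr⟩) (by simpa using hi.2) <|
      .cons (v := Sum.inr j) (by simpa using hj.2) <| .cons (by simpa using hj.1) .nil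
  refine hS.isAcyclic c ?_
  simp [c, Walk.isCycle_def, Walk.isTrail_def, hne, hne.symm, hij]

end BipGraph

/-- Empty blocks are allowed, unlike in `Finpartition`. -/
def IsFstPartition {α β : Type*} [Fintype α] [DecidableEq α] (S : Finset (Finset α × β)) :
    Prop :=
  (S : Set (Finset α × β)).PairwiseDisjoint Prod.fst ∧ S.biUnion Prod.fst = Finset.univ

theorem isFstPartition_insert_empty_iff {α β : Type*} [Fintype α] [DecidableEq α]
    [DecidableEq β] {S : Finset (Finset α × β)} (J : β) :
    IsFstPartition (insert (∅, J) S) ↔ IsFstPartition S := by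
  simp [IsFstPartition, Set.pairwiseDisjoint_insert, Finset.biUnion_insert]

section Lift

variable {n m : ℕ}

def extendBV (p : Finset (Fin n) × Finset (Fin m)) : Finset (Fin (n + 1)) × Finset (Fin m) :=
  (insert (Fin.last n) (p.1.image Fin.castSucc), p.2)

noncomputable def restrictBV (q : Finset (Fin (n + 1)) × Finset (Fin m)) :
    Finset (Fin n) × Finset (Fin m) :=
  (q.1.preimage Fin.castSucc (Fin.castSucc_injective n).injOn, q.2)

@[simp] theorem liftBV_snd (p : Finset (Fin n) × Finset (Fin m)) : (liftBV p).2 = p.2 := rfl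

@[simp] theorem extendBV_snd (p : Finset (Fin n) × Finset (Fin m)) : (extendBV p).2 = p.2 := rfl

theorem last_notMem_liftBV (p : Finset (Fin n) × Finset (Fin m)) :
    Fin.last n ∉ (liftBV p).1 := by
  simp [liftBV, Fin.castSucc_ne_last]

theorem last_mem_extendBV (p : Finset (Fin n) × Finset (Fin m)) :
    Fin.last n ∈ (extendBV p).1 :=
  Finset.mem_insert_self _ _

theorem restrictBV_liftBV (p : Finset (Fin n) × Finset (Fin m)) :
    restrictBV (liftBV p) = p := by
  ext <;> simp [restrictBV, liftBV]

theorem restrictBV_extendBV (p : Finset (Fin n) × Finset (Fin m)) :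
    restrictBV (extendBV p) = p := by
  ext <;> simp [restrictBV, extendBV, Fin.castSucc_ne_last]

theorem liftBV_restrictBV {q : Finset (Fin (n + 1)) × Finset (Fin m)} (h : Fin.last n ∉ q.1) :
    liftBV (restrictBV q) = q := by
  ext y
  · induction y using Fin.lastCases <;> simp [restrictBV, liftBV, h, Fin.castSucc_ne_last]
  · rfl

theorem extendBV_restrictBV {q : Finset (Fin (n + 1)) × Finset (Fin m)} (h : Fin.last n ∈ q.1) :
    extendBV (restrictBV q) = q := by
  ext y
  · induction y using Fin.lastCases <;> simp [restrictBV, extendBV, h, Fin.castSucc_ne_last]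
  · rfl

theorem liftBV_injective : Function.Injective (liftBV (n := n) (m := m)) :=
  Function.LeftInverse.injective restrictBV_liftBV

theorem extendBV_injective : Function.Injective (extendBV (n := n) (m := m)) :=
  Function.LeftInverse.injective restrictBV_extendBV

theorem liftBV_ne_extendBV (p p' : Finset (Fin n) × Finset (Fin m)) : liftBV p ≠ extendBV p' :=
  fun h => last_notMem_liftBV p (h ▸ last_mem_extendBV p')

theorem card_liftBV_fst (p : Finset (Fin n) × Finset (Fin m)) :
    (liftBV p).1.card = p.1.card :=
  Finset.card_image_of_injective _ (Fin.castSucc_injective n)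

theorem card_extendBV_fst (p : Finset (Fin n) × Finset (Fin m)) :
    (extendBV p).1.card = p.1.card + 1 := by
  rw [← card_liftBV_fst p]
  exact Finset.card_insert_of_notMem (last_notMem_liftBV p)

theorem insert_last_image_castSucc_eq_univ_iff {X : Finset (Fin n)} :
    insert (Fin.last n) (X.image Fin.castSucc) = Finset.univ ↔ X = Finset.univ := by
  refine ⟨fun h => Finset.eq_univ_of_forall fun z => ?_, fun h => ?_⟩
  · have hz : z.castSucc ∈ insert (Fin.last n) (X.image Fin.castSucc) :=
      h ▸ Finset.mem_univ _
    simpa [Fin.castSucc_ne_last] using hz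
  · ext y
    induction y using Fin.lastCases <;> simp [h]

theorem isFstPartition_insert_extendBV_iff {p : Finset (Fin n) × Finset (Fin m)}
    {A : Finset (Finset (Fin n) × Finset (Fin m))} (hp : p ∉ A) :
    IsFstPartition (insert (extendBV p) (A.image liftBV)) ↔ IsFstPartition (insert p A) := by
  have hdisj : ∀ a b : Finset (Fin n) × Finset (Fin m),
      Disjoint (liftBV a).1 (liftBV b).1 ↔ Disjoint a.1 b.1 := fun a b =>
    Finset.disjoint_image (Fin.castSucc_injective n)
  have hcover : (insert (extendBV p) (A.image liftBV)).biUnion Prod.fst =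
      insert (Fin.last n) (((insert p A).biUnion Prod.fst).image Fin.castSucc) := by
    simp [Finset.biUnion_insert, Finset.image_biUnion, Finset.biUnion_image, extendBV, liftBV,
      Finset.image_union]
  rw [IsFstPartition, IsFstPartition, hcover, insert_last_image_castSucc_eq_univ_iff,
    Finset.coe_insert, Finset.coe_insert, Set.pairwiseDisjoint_insert,
    Set.pairwiseDisjoint_insert, Finset.coe_image, liftBV_injective.injOn.pairwiseDisjoint_image]
  refine and_congr_left' (and_congr ?_ ?_)
  · simp only [Set.PairwiseDisjoint, Set.Pairwise, Function.onFun, Function.comp_apply, hdisj]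
  · simp only [Set.forall_mem_image, Finset.mem_coe]
    refine forall₂_congr fun a ha => ?_
    rw [show (extendBV p).1 = insert (Fin.last n) (liftBV p).1 from rfl,
      Finset.disjoint_insert_left, hdisj]
    simp [(liftBV_ne_extendBV a p).symm, (ne_of_mem_of_not_mem ha hp).symm, last_notMem_liftBV]

end Lift

section Attach

variable {n m : ℕ}

theorem mem_Gset_iff {S : Finset (Finset (Fin n) × Finset (Fin m))} :
    S ∈ Gset n m ↔
      (∀ p ∈ S, 2 ≤ p.1.card + p.2.card) ∧ IsFstPartition S ∧ (bipGraph S).IsTree :=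
  ⟨fun ⟨h1, h2, h3, h4⟩ => ⟨h1, ⟨h2, h3⟩, h4⟩,
    fun ⟨h1, ⟨h2, h3⟩, h4⟩ => ⟨h1, h2, h3, h4⟩⟩

theorem isTree_bipGraph_insert_extendBV_iff {p : Finset (Fin n) × Finset (Fin m)}
    {A : Finset (Finset (Fin n) × Finset (Fin m))} (hp : p ∉ A) :
    (bipGraph (insert (extendBV p) (A.image liftBV))).IsTree ↔
      (bipGraph (insert p A)).IsTree := by
  have hrestrict :
      restrictBV '' (liftBV '' (A : Set (Finset (Fin n) × Finset (Fin m)))) = A := by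
    simp [Set.image_image, restrictBV_liftBV]
  have hinj : Set.InjOn restrictBV
      (↑(insert (extendBV p) (A.image liftBV)) :
        Set (Finset (Fin (n + 1)) × Finset (Fin m))) := by
    have hnew : extendBV p ∉ liftBV '' (A : Set (Finset (Fin n) × Finset (Fin m))) :=
      fun ⟨a, _, ha⟩ => liftBV_ne_extendBV a p ha
    rw [Finset.coe_insert, Finset.coe_image, Set.injOn_insert hnew, hrestrict,
      restrictBV_extendBV]
    refine ⟨?_, hp⟩
    rintro _ ⟨a, -, rfl⟩ _ ⟨b, -, rfl⟩ h
    rw [restrictBV_liftBV, restrictBV_liftBV] at h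
    rw [h]
  have himage : (insert (extendBV p) (A.image liftBV)).image restrictBV = insert p A := by
    simp [Finset.image_insert, Finset.image_image, restrictBV_extendBV, Function.comp_def,
      restrictBV_liftBV]
  rw [← isTree_bipGraph_image_iff hinj fun _ => rfl, himage]

theorem insert_extendBV_mem_Gset_iff {p : Finset (Fin n) × Finset (Fin m)}
    {A : Finset (Finset (Fin n) × Finset (Fin m))} (hp : p ∉ A) :
    insert (extendBV p) (A.image liftBV) ∈ Gset (n + 1) m ↔
      (1 ≤ p.1.card + p.2.card ∧ ∀ a ∈ A, 2 ≤ a.1.card + a.2.card) ∧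
        IsFstPartition (insert p A) ∧ (bipGraph (insert p A)).IsTree := by
  rw [mem_Gset_iff, isFstPartition_insert_extendBV_iff hp,
    isTree_bipGraph_insert_extendBV_iff hp]
  refine and_congr_left' ?_
  simp only [Finset.forall_mem_insert, Finset.forall_mem_image, card_extendBV_fst,
    card_liftBV_fst, extendBV_snd, liftBV_snd]
  exact and_congr_left' (by omega)

theorem notMem_of_insert_extendBV_mem_Gset {p : Finset (Fin n) × Finset (Fin m)}
    {A : Finset (Finset (Fin n) × Finset (Fin m))}
    (h : insert (extendBV p) (A.image liftBV) ∈ Gset (n + 1) m) : p ∉ A := by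
  intro hpA
  obtain ⟨hval, ⟨hdisj, -⟩, htree⟩ := mem_Gset_iff.1 h
  have hlift : liftBV p ∈ insert (extendBV p) (A.image liftBV) :=
    Finset.mem_insert_of_mem (Finset.mem_image_of_mem _ hpA)
  have hext := Finset.mem_insert_self (extendBV p) (A.image liftBV)
  have hne := liftBV_ne_extendBV p p
  -- the boxes of `p` would lie in both its lift and its extension
  have hI : p.1 = ∅ := by
    have hself := Finset.disjoint_of_subset_right (Finset.subset_insert _ _)
      (hdisj hlift hext hne)
    simpa [liftBV] using hself
  have hJ : 1 < ((liftBV p).2 ∩ (extendBV p).2).card := by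
    rw [liftBV, extendBV, Finset.inter_self]
    exact (by simpa [liftBV, hI] using hval _ hlift : 2 ≤ p.2.card)
  exact hne (eq_of_isTree_bipGraph htree hlift hext hJ)

theorem exists_eq_insert_extendBV {T : Finset (Finset (Fin (n + 1)) × Finset (Fin m))}
    (hT : IsFstPartition T) :
    ∃ (p : Finset (Fin n) × Finset (Fin m)) (A : Finset (Finset (Fin n) × Finset (Fin m))),
      T = insert (extendBV p) (A.image liftBV) := by
  obtain ⟨q, hq, hlast⟩ := Finset.mem_biUnion.1 (hT.2 ▸ Finset.mem_univ (Fin.last n))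
  refine ⟨restrictBV q, (T.erase q).image restrictBV, ?_⟩
  rw [extendBV_restrictBV hlast, Finset.image_image, Finset.image_congr (g := id),
    Finset.image_id, Finset.insert_erase hq]
  intro r hr
  rw [Finset.mem_coe, Finset.mem_erase] at hr
  exact liftBV_restrictBV fun h => Finset.disjoint_left.1 (hT.1 hr.2 hq hr.1) h hlast

theorem insert_extendBV_image_liftBV_inj {p p' : Finset (Fin n) × Finset (Fin m)}
    {A A' : Finset (Finset (Fin n) × Finset (Fin m))} :
    insert (extendBV p) (A.image liftBV) = insert (extendBV p') (A'.image liftBV) ↔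
      p = p' ∧ A = A' := by
  refine ⟨fun h => ?_, by rintro ⟨rfl, rfl⟩; rfl⟩
  have hnot : ∀ (q : Finset (Fin n) × Finset (Fin m))
      (B : Finset (Finset (Fin n) × Finset (Fin m))), extendBV q ∉ B.image liftBV :=
    fun q B hq => by
    obtain ⟨b, -, hb⟩ := Finset.mem_image.1 hq
    exact liftBV_ne_extendBV b q hb
  have hpp : p = p' := by
    have hmem : extendBV p ∈ insert (extendBV p') (A'.image liftBV) :=
      h ▸ Finset.mem_insert_self _ _
    rcases Finset.mem_insert.1 hmem with h' | h'
    · exact extendBV_injective h'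
    · exact absurd h' (hnot p A')
  subst hpp
  refine ⟨rfl, Finset.image_injective liftBV_injective ?_⟩
  rw [← Finset.erase_insert (hnot p A), h, Finset.erase_insert (hnot p A')]

theorem attachBox_inl (S : Finset (Finset (Fin n) × Finset (Fin m))) (k : Fin m) :
    attachBox (S, Sum.inl k) = insert (extendBV (∅, {k})) (S.image liftBV) := by
  simp [attachBox, extendBV]

theorem attachBox_inr (S : Finset (Finset (Fin n) × Finset (Fin m)))
    (p : Finset (Fin n) × Finset (Fin m)) :
    attachBox (S, Sum.inr p) = insert (extendBV p) ((S.erase p).image liftBV) := rfl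

theorem leaf_notMem_of_mem_Gset {S : Finset (Finset (Fin n) × Finset (Fin m))}
    (hS : S ∈ Gset n m) (k : Fin m) : ((∅, {k}) : Finset (Fin n) × Finset (Fin m)) ∉ S :=
  fun h => by simpa using hS.1 _ h

theorem attachBox_inl_mem_Gset_iff {S : Finset (Finset (Fin n) × Finset (Fin m))} {k : Fin m}
    (hS : ((∅, {k}) : Finset (Fin n) × Finset (Fin m)) ∉ S) :
    attachBox (S, Sum.inl k) ∈ Gset (n + 1) m ↔ S ∈ Gset n m := by
  rw [attachBox_inl, insert_extendBV_mem_Gset_iff hS, isFstPartition_insert_empty_iff,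
    isTree_bipGraph_insert_iff hS rfl, mem_Gset_iff]
  simp

theorem attachBox_inr_mem_Gset_iff {S : Finset (Finset (Fin n) × Finset (Fin m))}
    {p : Finset (Fin n) × Finset (Fin m)} (hp : p ∈ S) (hval : 2 ≤ p.1.card + p.2.card) :
    attachBox (S, Sum.inr p) ∈ Gset (n + 1) m ↔ S ∈ Gset n m := by
  rw [attachBox_inr, insert_extendBV_mem_Gset_iff (Finset.notMem_erase p S),
    Finset.insert_erase hp, mem_Gset_iff]
  refine and_congr_left'
    ⟨fun h a ha => ?_, fun h => ⟨by omega, fun a ha => h a (Finset.mem_of_mem_erase ha)⟩⟩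
  by_cases hap : a = p
  · exact hap ▸ hval
  · exact h.2 a (Finset.mem_erase.2 ⟨hap, ha⟩)

theorem two_le_card_add_card_of_ne_leaf {p : Finset (Fin n) × Finset (Fin m)}
    (hJ : p.2.Nonempty) (hleaf : ∀ k, p ≠ (∅, {k})) : 2 ≤ p.1.card + p.2.card := by
  by_contra h
  have hJ1 := hJ.card_pos
  obtain ⟨k, hk⟩ := Finset.card_eq_one.1 (show p.2.card = 1 by omega)
  exact hleaf k (Prod.ext (Finset.card_eq_zero.1 (by omega)) hk)

def attachDomain (n m : ℕ) :
    Set (Finset (Finset (Fin n) × Finset (Fin m)) ×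
      (Fin m ⊕ (Finset (Fin n) × Finset (Fin m)))) :=
  {x | x.1 ∈ Gset n m ∧ ∀ p, x.2 = Sum.inr p → p ∈ x.1}

theorem mapsTo_attachBox : Set.MapsTo attachBox (attachDomain n m) (Gset (n + 1) m) := by
  rintro ⟨S, k | p⟩ ⟨hS, hp⟩
  · exact (attachBox_inl_mem_Gset_iff (leaf_notMem_of_mem_Gset hS k)).2 hS
  · exact (attachBox_inr_mem_Gset_iff (hp p rfl) (hS.1 p (hp p rfl))).2 hS

theorem injOn_attachBox : Set.InjOn attachBox (attachDomain n m) := by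
  rintro ⟨S, k | p⟩ ⟨hS, hp⟩ ⟨S', k' | p'⟩ ⟨hS', hp'⟩ h
  · rw [attachBox_inl, attachBox_inl, insert_extendBV_image_liftBV_inj] at h
    simp_all
  · rw [attachBox_inl, attachBox_inr, insert_extendBV_image_liftBV_inj] at h
    exact absurd (h.1 ▸ hp' p' rfl) (leaf_notMem_of_mem_Gset hS' k)
  · rw [attachBox_inr, attachBox_inl, insert_extendBV_image_liftBV_inj] at h
    exact absurd (h.1 ▸ hp p rfl) (leaf_notMem_of_mem_Gset hS k')
  · rw [attachBox_inr, attachBox_inr, insert_extendBV_image_liftBV_inj] at h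
    obtain ⟨rfl, hSS⟩ := h
    rw [← Finset.insert_erase (show p ∈ S from hp p rfl), hSS,
      Finset.insert_erase (show p ∈ S' from hp' p rfl)]

theorem surjOn_attachBox (hm : 0 < m) :
    Set.SurjOn attachBox (attachDomain n m) (Gset (n + 1) m) := by
  intro T hT
  obtain ⟨p, A, rfl⟩ := exists_eq_insert_extendBV (mem_Gset_iff.1 hT).2.1
  have hpA := notMem_of_insert_extendBV_mem_Gset hT
  by_cases hleaf : ∃ k, p = (∅, {k})
  · obtain ⟨k, rfl⟩ := hleaf
    exact ⟨(A, Sum.inl k), ⟨(attachBox_inl_mem_Gset_iff hpA).1 hT, by simp⟩,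
      attachBox_inl A k⟩
  · have hattach :
        attachBox (insert p A, Sum.inr p) = insert (extendBV p) (A.image liftBV) := by
      rw [attachBox_inr, Finset.erase_insert hpA]
    obtain ⟨-, -, htree⟩ := (insert_extendBV_mem_Gset_iff hpA).1 hT
    have hval := two_le_card_add_card_of_ne_leaf
      (snd_nonempty_of_isTree_bipGraph hm htree (Finset.mem_insert_self p A))
      (fun k hk => hleaf ⟨k, hk⟩)
    refine ⟨(insert p A, Sum.inr p), ⟨?_, by simp⟩, hattach⟩
    rw [← attachBox_inr_mem_Gset_iff (Finset.mem_insert_self p A) hval, hattach]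
    exact hT

theorem ncard_attachDomain :
    (attachDomain n m).ncard = ∑ S ∈ (Set.toFinite (Gset n m)).toFinset, (m + S.card) := by
  have hdom : attachDomain n m = ↑(((Set.toFinite (Gset n m)).toFinset.sigma
      fun S => (Finset.univ : Finset (Fin m)).disjSum S).map
        (Equiv.sigmaEquivProd _ _).toEmbedding) := by
    ext ⟨S, c⟩
    rcases c with k | ⟨I, J⟩ <;> simp [attachDomain]
  rw [hdom, Set.ncard_coe_finset, Finset.card_map, Finset.card_sigma]
  simp [Finset.card_disjSum]

end Attach

theorem Gset_succ_box_bij (n m : ℕ) (hm : 1 ≤ m) :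
    Set.BijOn attachBox
      {x : Finset (Finset (Fin n) × Finset (Fin m)) ×
          (Fin m ⊕ (Finset (Fin n) × Finset (Fin m))) |
        x.1 ∈ Gset n m ∧ ∀ p, x.2 = Sum.inr p → p ∈ x.1}
      (Gset (n + 1) m)
    ∧ (Gset (n + 1) m).ncard
        = ∑ S ∈ (Set.toFinite (Gset n m)).toFinset, (m + S.card) := by
  have hbij : Set.BijOn attachBox (attachDomain n m) (Gset (n + 1) m) :=
    ⟨mapsTo_attachBox, injOn_attachBox, surjOn_attachBox hm⟩
  refine ⟨hbij, ?_⟩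
  rw [← hbij.image_eq, hbij.injOn.ncard_image, ncard_attachDomain]
end
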